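/- For unit vectors e_o, e_t ∈ ℝ^d and Q ∈ [0,1], the cosine similarity between the watermarked embedding e_p = ((1−Q)e_o + Q e_t)/‖(1−Q)e_o + Q e_t‖ and the target e_t is a non-decreasing function of Q, provided e_o and e_t are not antipodal (e_o ≠ −e_t). -/

import Mathlib

noncomputable def cosSim {d : ℕ} (u v : EuclideanSpace ℝ (Fin d)) : ℝ :=
  (inner ℝ u v : ℝ) / (‖u‖ * ‖v‖)


lemma sq_cmp (x y : ℝ) (hx : 0 ≤ x) (hy : 0 ≤ y) (h : x^2 ≤ y^2) : x ≤ y := by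
  have := Real.sqrt_le_sqrt h
  rwa [Real.sqrt_sq hx, Real.sqrt_sq hy] at this

lemma key_real (c Q₁ Q₂ : ℝ) (hc1 : -1 < c) (hc2 : c ≤ 1)
    (h0 : 0 ≤ Q₁) (h12 : Q₁ ≤ Q₂) (h1 : Q₂ ≤ 1) :
    (c + Q₁*(1-c)) / Real.sqrt (1 - 2*Q₁*(1-Q₁)*(1-c))
      ≤ (c + Q₂*(1-c)) / Real.sqrt (1 - 2*Q₂*(1-Q₂)*(1-c)) := by
  have hQ1 : Q₁ ≤ 1 := le_trans h12 h1
  have hQ2 : 0 ≤ Q₂ := le_trans h0 h12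
  have hs₁ : (0:ℝ) < 1 - 2*Q₁*(1-Q₁)*(1-c) := by
    nlinarith [sq_nonneg (2*Q₁-1), mul_nonneg h0 (by linarith : (0:ℝ) ≤ 1-Q₁)]
  have hs₂ : (0:ℝ) < 1 - 2*Q₂*(1-Q₂)*(1-c) := by
    nlinarith [sq_nonneg (2*Q₂-1), mul_nonneg hQ2 (by linarith : (0:ℝ) ≤ 1-Q₂)]
  have hr₁ : 0 < Real.sqrt (1 - 2*Q₁*(1-Q₁)*(1-c)) := Real.sqrt_pos.mpr hs₁
  have hr₂ : 0 < Real.sqrt (1 - 2*Q₂*(1-Q₂)*(1-c)) := Real.sqrt_pos.mpr hs₂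
  have hsq₁ : (Real.sqrt (1 - 2*Q₁*(1-Q₁)*(1-c)))^2 = 1 - 2*Q₁*(1-Q₁)*(1-c) :=
    Real.sq_sqrt hs₁.le
  have hsq₂ : (Real.sqrt (1 - 2*Q₂*(1-Q₂)*(1-c)))^2 = 1 - 2*Q₂*(1-Q₂)*(1-c) :=
    Real.sq_sqrt hs₂.le
  rw [div_le_div_iff₀ hr₁ hr₂]
  have hn12 : c + Q₁*(1-c) ≤ c + Q₂*(1-c) := by nlinarith
  rcases le_or_gt 0 (c + Q₁*(1-c)) with hp | hn
  · have hn2 : 0 ≤ c + Q₂*(1-c) := le_trans hp hn12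
    apply sq_cmp _ _ (mul_nonneg hp hr₂.le) (mul_nonneg hn2 hr₁.le)
    rw [mul_pow, mul_pow, hsq₁, hsq₂]
    have hX : 0 ≤ (2 - Q₁ - Q₂) - 2*(1-c)*(1-Q₁)*(1-Q₂) := by
      nlinarith [mul_nonneg hp (by linarith : (0:ℝ) ≤ 1-Q₂),
        mul_nonneg hn2 (by linarith : (0:ℝ) ≤ 1-Q₁)]
    have hprod : 0 ≤ (1-c)*(1+c)*((Q₂-Q₁)*((2 - Q₁ - Q₂) - 2*(1-c)*(1-Q₁)*(1-Q₂))) :=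
      mul_nonneg (mul_nonneg (by linarith) (by linarith))
        (mul_nonneg (by linarith) hX)
    nlinarith [hprod]
  · rcases le_or_gt 0 (c + Q₂*(1-c)) with hp2 | hn2
    · exact le_trans (mul_nonpos_of_nonpos_of_nonneg hn.le hr₂.le)
        (mul_nonneg hp2 hr₁.le)
    · have key : (-(c + Q₂*(1-c))) * Real.sqrt (1 - 2*Q₁*(1-Q₁)*(1-c))
          ≤ (-(c + Q₁*(1-c))) * Real.sqrt (1 - 2*Q₂*(1-Q₂)*(1-c)) := by
        apply sq_cmp _ _ (mul_nonneg (by linarith) hr₁.le)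
          (mul_nonneg (by linarith) hr₂.le)
        rw [mul_pow, mul_pow, hsq₁, hsq₂, neg_sq, neg_sq]
        have hX : 0 ≤ 2*(1-c)*(1-Q₁)*(1-Q₂) - (2 - Q₁ - Q₂) := by
          nlinarith [mul_nonneg (by linarith : (0:ℝ) ≤ -(c + Q₁*(1-c)))
              (by linarith : (0:ℝ) ≤ 1-Q₂),
            mul_nonneg (by linarith : (0:ℝ) ≤ -(c + Q₂*(1-c)))
              (by linarith : (0:ℝ) ≤ 1-Q₁)]
        have hprod : 0 ≤ (1-c)*(1+c)*((Q₂-Q₁)*(2*(1-c)*(1-Q₁)*(1-Q₂) - (2 - Q₁ - Q₂))) :=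
          mul_nonneg (mul_nonneg (by linarith) (by linarith))
            (mul_nonneg (by linarith) hX)
        nlinarith [hprod]
      rw [neg_mul, neg_mul] at key
      linarith


lemma cos_formula {d : ℕ} (e_o e_t : EuclideanSpace ℝ (Fin d))
    (ho : ‖e_o‖ = 1) (ht : ‖e_t‖ = 1) (Q : ℝ)
    (hs : (0:ℝ) < 1 - 2*Q*(1-Q)*(1-(inner ℝ e_o e_t : ℝ))) :
    (inner ℝ (‖(1 - Q) • e_o + Q • e_t‖⁻¹ • ((1 - Q) • e_o + Q • e_t)) e_t : ℝ) /
      (‖‖(1 - Q) • e_o + Q • e_t‖⁻¹ • ((1 - Q) • e_o + Q • e_t)‖ * ‖e_t‖)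
    = ((inner ℝ e_o e_t : ℝ) + Q*(1-(inner ℝ e_o e_t : ℝ))) /
        Real.sqrt (1 - 2*Q*(1-Q)*(1-(inner ℝ e_o e_t : ℝ))) := by
  set c : ℝ := (inner ℝ e_o e_t : ℝ) with hc
  set v := (1 - Q) • e_o + Q • e_t with hv
  clear_value c v
  have hnormsq : ‖v‖^2 = 1 - 2*Q*(1-Q)*(1-c) := by
    rw [hv, norm_add_sq_real, norm_smul, norm_smul, real_inner_smul_left,
      real_inner_smul_right, ho, ht]
    simp only [Real.norm_eq_abs, mul_one, sq_abs]
    rw [← hc]; ring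
  have hnorm : ‖v‖ = Real.sqrt (1 - 2*Q*(1-Q)*(1-c)) := by
    rw [← hnormsq, Real.sqrt_sq (norm_nonneg v)]
  have hvpos : 0 < ‖v‖ := by rw [hnorm]; exact Real.sqrt_pos.mpr hs
  have hinner : (inner ℝ v e_t : ℝ) = c + Q*(1-c) := by
    rw [hv, inner_add_left, real_inner_smul_left, real_inner_smul_left,
      real_inner_self_eq_norm_sq, ht]
    rw [← hc]; ring
  rw [real_inner_smul_left, hinner, norm_smul, Real.norm_eq_abs,
    abs_inv, abs_of_nonneg (norm_nonneg v), inv_mul_cancel₀ hvpos.ne', ht]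
  rw [hnorm]
  field_simp

theorem cosSim_monotone_in_Q {d : ℕ} (e_o e_t : EuclideanSpace ℝ (Fin d))
    (ho : ‖e_o‖ = 1) (ht : ‖e_t‖ = 1) (hne : e_o ≠ -e_t)
    (Q₁ Q₂ : ℝ) (h0 : 0 ≤ Q₁) (h12 : Q₁ ≤ Q₂) (h1 : Q₂ ≤ 1) :
    cosSim (‖(1 - Q₁) • e_o + Q₁ • e_t‖⁻¹ • ((1 - Q₁) • e_o + Q₁ • e_t)) e_t
      ≤ cosSim (‖(1 - Q₂) • e_o + Q₂ • e_t‖⁻¹ • ((1 - Q₂) • e_o + Q₂ • e_t)) e_t := by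
  set c : ℝ := (inner ℝ e_o e_t : ℝ) with hc
  have hc_le : c ≤ 1 := by
    have := real_inner_le_norm e_o e_t
    rw [ho, ht] at this; simpa [hc] using this
  have hc_gt : -1 < c := by
    rcases lt_or_eq_of_le (by
      have := real_inner_le_norm e_o (-e_t)
      rw [ho, norm_neg, ht, inner_neg_right] at this
      simp only [hc]; linarith : (-1:ℝ) ≤ c) with h | h
    · exact h
    · exfalso
      apply hne
      have : (inner ℝ e_o (-e_t) : ℝ) = 1 := by
        rw [inner_neg_right]; simp [hc] at h ⊢; linarith
      exact (inner_eq_one_iff_of_norm_eq_one (𝕜 := ℝ) ho (by rw [norm_neg, ht])).mp this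
  have hQ1 : Q₁ ≤ 1 := le_trans h12 h1
  have hQ2 : 0 ≤ Q₂ := le_trans h0 h12
  have hs₁ : (0:ℝ) < 1 - 2*Q₁*(1-Q₁)*(1-c) := by
    nlinarith [sq_nonneg (2*Q₁-1), mul_nonneg h0 (by linarith : (0:ℝ) ≤ 1-Q₁)]
  have hs₂ : (0:ℝ) < 1 - 2*Q₂*(1-Q₂)*(1-c) := by
    nlinarith [sq_nonneg (2*Q₂-1), mul_nonneg hQ2 (by linarith : (0:ℝ) ≤ 1-Q₂)]
  unfold cosSim
  rw [hc] at hs₁ hs₂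
  rw [cos_formula e_o e_t ho ht Q₁ hs₁, cos_formula e_o e_t ho ht Q₂ hs₂]
  exact key_real _ _ _ (by rw [hc] at hc_gt; exact hc_gt) (by rw [hc] at hc_le; exact hc_le)
    h0 h12 h1
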